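/- arXiv:2008.13754 — 2 statements merged into one kernel-verified Lean document; each statement's English description precedes it below -/
import Mathlib

section
/- Let r > 0 and let f : ℝ → ℝ be differentiable with f(0) = 0 and f'(x) ≤ f(x)² + r² for all x ≥ 0. Then for every x with 0 ≤ x < π/(2r) one has f(x) ≤ r·tan(r·x). -/
open Real Set

lemma one_div_one_add_div_sq_mul_div_le {r y d : ℝ} (hr : 0 < r) (hd : d ≤ y ^ 2 + r ^ 2) :
    1 / (1 + (y / r) ^ 2) * (d / r) ≤ r := by
  have hform : 1 / (1 + (y / r) ^ 2) * (d / r) = r * d / (y ^ 2 + r ^ 2) := by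
    field_simp
    ring
  rw [hform, div_le_iff₀ (by positivity)]
  nlinarith

/-- Integrated form of `(arctan (f / r))' = r f' / (f² + r²) ≤ r`. -/
theorem arctan_div_le_add_mul_sub {r a : ℝ} {f : ℝ → ℝ} (hr : 0 < r)
    (hf : DifferentiableOn ℝ f (Ici a))
    (hsub : ∀ x, a ≤ x → deriv f x ≤ f x ^ 2 + r ^ 2) {x : ℝ} (hx : a ≤ x) :
    arctan (f x / r) ≤ arctan (f a / r) + r * (x - a) := by
  have hcont : ContinuousOn (fun y => arctan (f y / r)) (Ici a) :=
    continuous_arctan.comp_continuousOn (hf.continuousOn.div_const r)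
  have hderiv : ∀ y ∈ interior (Ici a), HasDerivAt (fun y => arctan (f y / r))
      (1 / (1 + (f y / r) ^ 2) * (deriv f y / r)) y := by
    intro y hy
    rw [interior_Ici] at hy
    exact ((hf.differentiableAt (Ici_mem_nhds hy)).hasDerivAt.div_const r).arctan
  have hslope := (convex_Ici a).image_sub_le_mul_sub_of_deriv_le hcont
    (fun y hy => (hderiv y hy).differentiableAt.differentiableWithinAt)
    (fun y hy => by
      rw [(hderiv y hy).deriv]
      rw [interior_Ici] at hy
      exact one_div_one_add_div_sq_mul_div_le hr (hsub y (le_of_lt hy)))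
    a self_mem_Ici x hx hx
  linarith

lemma le_tan_of_arctan_le {z t : ℝ} (h : arctan z ≤ t) (ht : t < π / 2) : z ≤ tan t := by
  have hle := strictMonoOn_tan.monotoneOn ⟨neg_pi_div_two_lt_arctan z, arctan_lt_pi_div_two z⟩
    ⟨(neg_pi_div_two_lt_arctan z).trans_le h, ht⟩ h
  rwa [tan_arctan] at hle

theorem riccati_comparison_one_sided (r : ℝ) (hr : 0 < r) (f : ℝ → ℝ)
    (hdiff : Differentiable ℝ f) (h0 : f 0 = 0)
    (hsub : ∀ x : ℝ, 0 ≤ x → deriv f x ≤ (f x) ^ 2 + r ^ 2) :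
    ∀ x : ℝ, 0 ≤ x → x < Real.pi / (2 * r) → f x ≤ r * Real.tan (r * x) := by
  intro x hx hxlt
  have hrx : r * x < π / 2 := by
    rw [lt_div_iff₀ (by positivity)] at hxlt
    linarith
  have harctan : arctan (f x / r) ≤ r * x := by
    simpa [h0] using arctan_div_le_add_mul_sub hr hdiff.differentiableOn hsub hx
  calc f x = r * (f x / r) := by field_simp
    _ ≤ r * tan (r * x) := mul_le_mul_of_nonneg_left (le_tan_of_arctan_le harctan hrx) hr.le
end

section
/- Let r > 0 and let g be differentiable on an interval [0, b] with b < π/(2r), g(0) = 0, and g'(x) ≤ g(x)² + r² for all x in [0, b]. Then g(b) ≤ r·tan(r·b) < ∞; in particular g is bounded on [0, b] by r·tan(r·b). -/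
open Set Real

theorem riccati_bound_on_subinterval (r b : ℝ) (hr : 0 < r)
    (hb0 : 0 ≤ b) (hb : b < Real.pi / (2 * r))
    (g g' : ℝ → ℝ)
    (hderiv : ∀ x ∈ Set.Icc (0 : ℝ) b, HasDerivWithinAt g (g' x) (Set.Icc (0 : ℝ) b) x)
    (h0 : g 0 = 0)
    (hsub : ∀ x ∈ Set.Icc (0 : ℝ) b, g' x ≤ (g x) ^ 2 + r ^ 2) :
    g b ≤ r * Real.tan (r * b) ∧ ∀ x ∈ Set.Icc (0 : ℝ) b, g x ≤ r * Real.tan (r * b) := by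
  have hrb : r * b < Real.pi / 2 := by
    have h2 : r * (Real.pi / (2 * r)) = Real.pi / 2 := by
      field_simp
    calc r * b < r * (Real.pi / (2 * r)) := mul_lt_mul_of_pos_left hb hr
      _ = Real.pi / 2 := h2
  have hrb0 : 0 ≤ r * b := by positivity
  -- cos positivity on [0, b]
  have hcos : ∀ x ∈ Icc (0:ℝ) b, 0 < Real.cos (r * x) := by
    intro x hx
    apply Real.cos_pos_of_mem_Ioo
    constructor
    · nlinarith [Real.pi_pos, hx.1]
    · nlinarith [hx.2]
  have htan_le : ∀ x ∈ Icc (0:ℝ) b, Real.tan (r * x) ≤ Real.tan (r * b) := by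
    intro x hx
    rcases eq_or_lt_of_le hx.2 with h | h
    · rw [h]
    · exact le_of_lt (Real.tan_lt_tan_of_nonneg_of_lt_pi_div_two (mul_nonneg hr.le hx.1) hrb
        (by nlinarith))
  have htanb0 : 0 ≤ Real.tan (r * b) :=
    Real.tan_nonneg_of_nonneg_of_le_pi_div_two hrb0 hrb.le
  set M : ℝ := r * Real.tan (r * b) with hM
  have hM0 : 0 ≤ M := by positivity
  set C : ℝ := 2 * M + 1 with hC
  have hC0 : 0 < C := by positivity
  -- key comparison with B_ε
  have key : ∀ ε : ℝ, 0 < ε → ε * Real.exp (C * b) < 1 →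
      ∀ x ∈ Icc (0:ℝ) b, g x ≤ r * Real.tan (r * x) + ε * Real.exp (C * x) := by
    intro ε hε hε1
    set B : ℝ → ℝ := fun x => r * Real.tan (r * x) + ε * Real.exp (C * x) with hB
    set B' : ℝ → ℝ := fun x => r * (1 / Real.cos (r * x) ^ 2 * r) + ε * (Real.exp (C * x) * C)
      with hB'
    have hBd : ∀ x ∈ Icc (0:ℝ) b, HasDerivAt B (B' x) x := by
      intro x hx
      have h := ((Real.hasDerivAt_tan (hcos x hx).ne').comp x
        ((hasDerivAt_id x).const_mul r)).const_mul r |>.add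
        (((Real.hasDerivAt_exp (C * x)).comp x ((hasDerivAt_id x).const_mul C)).const_mul ε)
      simpa [hB, hB', Function.comp, mul_one, Pi.add_def] using h
    have hgc : ContinuousOn g (Icc 0 b) := fun x hx => (hderiv x hx).continuousWithinAt
    have main : ∀ ⦃x⦄, x ∈ Icc (0:ℝ) b → g x ≤ B x := by
      apply image_le_of_deriv_right_lt_deriv_boundary' hgc
      · intro x hx
        refine (hderiv x (Ico_subset_Icc_self hx)).mono_of_mem_nhdsWithin ?_
        rw [mem_nhdsWithin]
        refine ⟨Iio b, isOpen_Iio, hx.2, ?_⟩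
        rintro y ⟨hy1, hy2⟩
        exact ⟨le_trans hx.1 hy2, le_of_lt hy1⟩
      · simp [h0, hB, le_of_lt hε]
      · exact fun x hx => (hBd x hx).continuousAt.continuousWithinAt
      · exact fun x hx => (hBd x (Ico_subset_Icc_self hx)).hasDerivWithinAt
      · intro x hx hgx
        have hx' : x ∈ Icc (0:ℝ) b := Ico_subset_Icc_self hx
        have hc := hcos x hx'
        set T : ℝ := r * Real.tan (r * x) with hT
        set E : ℝ := ε * Real.exp (C * x) with hE
        have hE0 : 0 < E := by positivity
        have hE1 : E < 1 := by
          have : Real.exp (C * x) ≤ Real.exp (C * b) :=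
            Real.exp_le_exp.mpr (mul_le_mul_of_nonneg_left hx'.2 hC0.le)
          nlinarith
        have hTM : T ≤ M := mul_le_mul_of_nonneg_left (htan_le x hx') hr.le
        have hsq : r * (1 / Real.cos (r * x) ^ 2 * r) = r ^ 2 + T ^ 2 := by
          have h1 : Real.sin (r * x) ^ 2 + Real.cos (r * x) ^ 2 = 1 :=
            Real.sin_sq_add_cos_sq _
          rw [hT, Real.tan_eq_sin_div_cos]
          field_simp
          nlinarith
        have hgB : g x = T + E := hgx
        calc g' x ≤ (g x) ^ 2 + r ^ 2 := hsub x hx'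
          _ = T ^ 2 + 2 * T * E + E ^ 2 + r ^ 2 := by rw [hgB]; ring
          _ < T ^ 2 + r ^ 2 + C * E := by nlinarith
          _ = B' x := by simp only [hB', hsq, hE]; ring
    exact fun x hx => main hx
  -- pass to the limit ε → 0
  have final : ∀ x ∈ Icc (0:ℝ) b, g x ≤ r * Real.tan (r * x) := by
    intro x hx
    refine le_of_forall_pos_le_add ?_
    intro δ hδ
    set ε : ℝ := min δ 1 * Real.exp (-(C * b)) / 2 with hε
    have hεpos : 0 < ε := by positivity
    have hεexp : ε * Real.exp (C * b) = min δ 1 / 2 := by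
      rw [hε, Real.exp_neg]
      have := Real.exp_pos (C * b)
      field_simp
    have h1 : ε * Real.exp (C * b) < 1 := by
      rw [hεexp]
      have : min δ 1 ≤ 1 := min_le_right _ _
      linarith
    have := key ε hεpos h1 x hx
    have hxx : ε * Real.exp (C * x) ≤ δ := by
      have hle : Real.exp (C * x) ≤ Real.exp (C * b) :=
        Real.exp_le_exp.mpr (mul_le_mul_of_nonneg_left hx.2 hC0.le)
      have h2 : ε * Real.exp (C * x) ≤ ε * Real.exp (C * b) :=
        mul_le_mul_of_nonneg_left hle hεpos.le
      rw [hεexp] at h2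
      have h3 : min δ 1 / 2 ≤ δ := by
        have := min_le_left δ 1; linarith
      linarith
    linarith
  refine ⟨final b ⟨hb0, le_refl b⟩, fun x hx => ?_⟩
  exact (final x hx).trans (mul_le_mul_of_nonneg_left (htan_le x hx) hr.le)
end
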